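/- Let Λ be a group acting on a group H by τ : Λ → Aut(H) with trivial stabilizers, and let K be any group. Let Λ act on the binary free product H ∗ K by the diagonal action σ, where σ_g restricts to τ_g on (the image of) H and to the identity on (the image of) K. Then for every ξ ∈ H ∗ K: if ξ lies in the canonical image of K, the stabilizer {g ∈ Λ : σ_g(ξ) = ξ} equals all of Λ; and if ξ does not lie in the canonical image of K, the stabilizer {g ∈ Λ : σ_g(ξ) = ξ} equals {1}. -/

import Mathlib

/-! An element of `H ∗ K` has a unique reduced word, and `σ_g` acts on reduced words letter by
letter, by `τ_g` on letters from `H` and trivially on letters from `K`. Hence an element fixed by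
`σ_g` has every letter fixed. For `g ≠ 1` no nontrivial letter from `H` is fixed, so the reduced
word consists of letters from `K` only; being reduced, it has at most one letter, i.e. the element
lies in the image of `K`. -/

open Monoid

namespace Monoid.CoprodI.Word

variable {ι : Type*} {M N : ι → Type*} [∀ i, Monoid (M i)] [∀ i, Monoid (N i)]

def map (φ : ∀ i, M i →* N i) (hφ : ∀ i, Function.Injective (φ i)) (w : Word M) :
    Word N where
  toList := w.toList.map (Sigma.map id fun i => φ i)
  ne_one l hl := by
    obtain ⟨⟨i, m⟩, hm, rfl⟩ := List.mem_map.1 hl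
    exact (map_ne_one_iff (φ i) (hφ i)).2 (w.ne_one _ hm)
  chain_ne := (List.isChain_map _).2 w.chain_ne

theorem prod_map (φ : ∀ i, M i →* N i) (hφ : ∀ i, Function.Injective (φ i)) (w : Word M) :
    (w.map φ hφ).prod = lift (fun i => of.comp (φ i)) w.prod := by
  simp only [prod, map, map_list_prod, List.map_map]
  rfl

theorem equiv_lift_eq_map [DecidableEq ι] [∀ i, DecidableEq (M i)] [∀ i, DecidableEq (N i)]
    (φ : ∀ i, M i →* N i) (hφ : ∀ i, Function.Injective (φ i)) (x : CoprodI M) :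
    equiv (lift (fun i => of.comp (φ i)) x) = (equiv x).map φ hφ := by
  rw [← Equiv.eq_symm_apply]
  exact (congrArg _ (equiv.symm_apply_apply x)).symm.trans (prod_map φ hφ _).symm

theorem apply_snd_eq_snd_of_lift_apply_eq_self [DecidableEq ι] [∀ i, DecidableEq (M i)]
    {φ : ∀ i, M i →* M i} (hφ : ∀ i, Function.Injective (φ i)) {x : CoprodI M}
    (hx : lift (fun i => of.comp (φ i)) x = x) : ∀ l ∈ (equiv x).toList, φ l.1 l.2 = l.2 := by
  have hlist : (equiv x).toList.map (Sigma.map id fun i => φ i) = (equiv x).toList.map id := by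
    rw [List.map_id]
    exact congrArg toList ((equiv_lift_eq_map φ hφ x).symm.trans (congrArg equiv hx))
  intro l hl
  exact eq_of_heq (Sigma.mk.inj_iff.1 (List.map_inj_left.1 hlist l hl)).2

theorem prod_mem_range_of_forall_fst_eq {i : ι} (w : Word M) (hw : ∀ l ∈ w.toList, l.1 = i) :
    w.prod ∈ Set.range (of (i := i)) := by
  rcases hlist : w.toList with _ | ⟨⟨j, m⟩, _ | ⟨_, _⟩⟩
  · exact ⟨1, by simp [prod, hlist]⟩
  · obtain rfl : j = i := hw ⟨j, m⟩ (by simp [hlist])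
    exact ⟨m, by simp [prod, hlist]⟩
  · have hchain := hlist ▸ w.chain_ne
    exact absurd ((hw _ (by simp [hlist])).trans (hw _ (by simp [hlist])).symm)
      (List.isChain_cons_cons.1 hchain).1

end Monoid.CoprodI.Word

namespace Monoid.Coprod

universe u v

variable {M : Type u} {N : Type v} [Monoid M] [Monoid N]

/-- `M ∗ N` as an indexed coproduct over `Bool` (`true ↦ M`), so that the normal forms
`CoprodI.Word` apply; `ULift` brings both factors into one universe. -/
abbrev BoolFamily (M : Type u) (N : Type v) (b : Bool) : Type max u v :=
  cond b (ULift.{v} M) (ULift.{u} N)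

instance : ∀ b, Monoid (BoolFamily M N b)
  | true => ULift.monoid
  | false => ULift.monoid

def toCoprodI : M ∗ N →* CoprodI (BoolFamily M N) :=
  lift (CoprodI.of (i := true) |>.comp MulEquiv.ulift.symm.toMonoidHom)
    (CoprodI.of (i := false) |>.comp MulEquiv.ulift.symm.toMonoidHom)

def ofCoprodI : CoprodI (BoolFamily M N) →* M ∗ N :=
  CoprodI.lift fun
    | true => inl.comp MulEquiv.ulift.toMonoidHom
    | false => inr.comp MulEquiv.ulift.toMonoidHom

theorem ofCoprodI_toCoprodI (x : M ∗ N) : ofCoprodI (toCoprodI x) = x := by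
  have : (ofCoprodI (M := M) (N := N)).comp toCoprodI = MonoidHom.id _ := by
    apply hom_ext <;> ext <;> rfl
  exact DFunLike.congr_fun this x

theorem toCoprodI_injective : Function.Injective (toCoprodI : M ∗ N →* _) :=
  Function.LeftInverse.injective ofCoprodI_toCoprodI

def boolFamilyMap (f : M →* M) (g : N →* N) : ∀ b, BoolFamily M N b →* BoolFamily M N b
  | true => MulEquiv.ulift.symm.toMonoidHom.comp (f.comp MulEquiv.ulift.toMonoidHom)
  | false => MulEquiv.ulift.symm.toMonoidHom.comp (g.comp MulEquiv.ulift.toMonoidHom)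

theorem boolFamilyMap_injective {f : M →* M} {g : N →* N} (hf : Function.Injective f)
    (hg : Function.Injective g) : ∀ b, Function.Injective (boolFamilyMap f g b)
  | true => fun _ _ h => ULift.ext _ _ (hf (congrArg ULift.down h))
  | false => fun _ _ h => ULift.ext _ _ (hg (congrArg ULift.down h))

theorem toCoprodI_map (f : M →* M) (g : N →* N) (x : M ∗ N) :
    toCoprodI (map f g x) = CoprodI.lift (fun b => CoprodI.of.comp (boolFamilyMap f g b))
      (toCoprodI x) := by
  have : toCoprodI.comp (map f g) =
      (CoprodI.lift fun b => CoprodI.of.comp (boolFamilyMap f g b)).comp toCoprodI := by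
    apply hom_ext <;> ext <;> rfl
  exact DFunLike.congr_fun this x

theorem mem_range_inr_of_map_apply_eq_self {f : M →* M} (hf_inj : Function.Injective f)
    (hf : ∀ m, f m = m → m = 1) {ξ : M ∗ N} (hξ : map f (MonoidHom.id N) ξ = ξ) :
    ξ ∈ Set.range inr := by
  classical
  set x := toCoprodI ξ
  have hx :
      CoprodI.lift (fun b => CoprodI.of.comp (boolFamilyMap f (MonoidHom.id N) b)) x = x := by
    rw [← toCoprodI_map, hξ]
  have hfixed := CoprodI.Word.apply_snd_eq_snd_of_lift_apply_eq_self
    (boolFamilyMap_injective hf_inj Function.injective_id) hx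
  have hfalse : ∀ l ∈ (CoprodI.Word.equiv x).toList, l.1 = false := by
    rintro ⟨_ | _, m⟩ hl
    · rfl
    · exact absurd (ULift.ext _ _ (hf _ (congrArg ULift.down (hfixed _ hl))))
        ((CoprodI.Word.equiv x).ne_one _ hl)
  obtain ⟨n, hn⟩ := CoprodI.Word.prod_mem_range_of_forall_fst_eq _ hfalse
  exact ⟨n.down, toCoprodI_injective <| hn.trans (CoprodI.Word.equiv.symm_apply_apply x)⟩

end Monoid.Coprod

/-- For the diagonal action `σ` of `Λ` on the binary free product `H ∗ K` (acting by `τ` on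
the image of `H` and trivially on the image of `K`), where `τ` has trivial stabilizers:
the stabilizer of `ξ` is all of `Λ` if `ξ` lies in the canonical image of `K`, and
is `{1}` otherwise. -/
theorem diagonal_action_coprod_stabilizers
    {Λ H K : Type*} [Group Λ] [Group H] [Group K]
    (τ : Λ →* MulAut H)
    (hτ : ∀ h : H, h ≠ 1 → ∀ g : Λ, τ g h = h → g = 1)
    (σ : Λ →* MulAut (Coprod H K))
    (hσl : ∀ (g : Λ) (h : H), σ g (Coprod.inl h) = Coprod.inl (τ g h))
    (hσr : ∀ (g : Λ) (k : K), σ g (Coprod.inr k) = Coprod.inr k) :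
    ∀ ξ : Coprod H K,
      (ξ ∈ Set.range (Coprod.inr : K →* Coprod H K) →
        {g : Λ | σ g ξ = ξ} = Set.univ) ∧
      (ξ ∉ Set.range (Coprod.inr : K →* Coprod H K) →
        {g : Λ | σ g ξ = ξ} = {1}) := by
  have hσ : ∀ g, (σ g).toMonoidHom = Coprod.map (τ g).toMonoidHom (MonoidHom.id K) := fun g =>
    Coprod.hom_ext (MonoidHom.ext (hσl g)) (MonoidHom.ext (hσr g))
  intro ξ
  refine ⟨fun ⟨k, hk⟩ => Set.eq_univ_of_forall fun g => hk ▸ hσr g k, fun hξ => ?_⟩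
  refine Set.eq_singleton_iff_unique_mem.2 ⟨by simp, fun g hg => ?_⟩
  by_contra hg1
  have hτg : ∀ h, τ g h = h → h = 1 := fun h hh => by_contra fun h1 => hg1 (hτ h h1 g hh)
  have hξg : Coprod.map (τ g).toMonoidHom (MonoidHom.id K) ξ = ξ := by
    rw [← hσ g]
    exact hg
  exact hξ (Coprod.mem_range_inr_of_map_apply_eq_self (f := (τ g).toMonoidHom) (τ g).injective
    hτg hξg)
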